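/- Let β, G be positive C² functions on [p₀,0] satisfying 2βGG'' − β(G')² + β'GG' − 2β''G² − 4k²G² + 4z = 0 with z < 0, and assume ∫_{p₀}^0 √|z|/(G(s)√(β(s))) ds < π. Then M(p) = √(G(p)/β(p))·sin(∫_{p₀}^p √|z|/(G(s)√(β(s))) ds) satisfies βM'' + (3/2)β'M' = k²M on [p₀,0] and M(p₀)=0. -/

import Mathlib

/-!
Write `M = R sin Φ` with amplitude `R = √(G/β)`, so `R' = R L / 2` for the logarithmic derivative
`L = G'/G - β'/β` of `R²`, and phase `Φ' = ω = √|z| / (G √β)`. Then `β M'' + (3/2) β' M'` is `R`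
times a combination of `sin Φ` and `cos Φ`. The `cos Φ` coefficient vanishes because
`R² β^{3/2} ω = √|z|` is constant, and the `sin Φ` coefficient is `k²` by the constraint.
-/

open Real Set Filter Topology Metric

theorem IsCompact.exists_isOpen_convex_between {E : Type*} [NormedAddCommGroup E]
    [NormedSpace ℝ E] {K U : Set E} (hK : IsCompact K) (hKc : Convex ℝ K) (hU : IsOpen U)
    (hKU : K ⊆ U) : ∃ V, IsOpen V ∧ Convex ℝ V ∧ K ⊆ V ∧ V ⊆ U := by
  obtain ⟨δ, hδ, hδU⟩ := hK.exists_thickening_subset_open hU hKU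
  exact ⟨thickening δ K, isOpen_thickening, hKc.thickening δ, self_subset_thickening hδ K, hδU⟩

theorem hasDerivAt_integral_of_continuousOn {E : Type*} [NormedAddCommGroup E]
    [NormedSpace ℝ E] [CompleteSpace E] {f : ℝ → E} {V : Set ℝ} (hV : IsOpen V)
    (hVc : V.OrdConnected) (hf : ContinuousOn f V) {a x : ℝ} (ha : a ∈ V) (hx : x ∈ V) :
    HasDerivAt (fun u => ∫ s in a..u, f s) (f x) x :=
  intervalIntegral.integral_hasDerivAt_right (hf.mono (hVc.uIcc_subset ha hx)).intervalIntegrable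
    (hf.stronglyMeasurableAtFilter hV x hx) (hf.continuousAt (hV.mem_nhds hx))

section Derivatives

variable {f g : ℝ → ℝ} {f' g' x : ℝ}

theorem HasDerivAt.sqrt_div_of_pos (hf : HasDerivAt f f' x) (hg : HasDerivAt g g' x)
    (hfx : 0 < f x) (hgx : 0 < g x) :
    HasDerivAt (fun y => √(f y / g y)) (√(f x / g x) * (f' / f x - g' / g x) / 2) x := by
  refine ((hf.div hg hgx.ne').sqrt (div_pos hfx hgx).ne').congr_deriv ?_
  simp only [Pi.div_apply]
  field_simp
  rw [sq_sqrt (div_pos hfx hgx).le]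
  field_simp

theorem HasDerivAt.const_div_mul_sqrt (c : ℝ) (hf : HasDerivAt f f' x) (hg : HasDerivAt g g' x)
    (hfx : f x ≠ 0) (hgx : 0 < g x) :
    HasDerivAt (fun y => c / (f y * √(g y)))
      (-(c / (f x * √(g x))) * (f' / f x + g' / (2 * g x))) x := by
  have hs : 0 < √(g x) := sqrt_pos.mpr hgx
  refine ((hasDerivAt_const x c).div (hf.mul (hg.sqrt hgx.ne'))
    (mul_ne_zero hfx hs.ne')).congr_deriv ?_
  simp only [Pi.mul_apply]
  field_simp
  rw [sq_sqrt hgx.le]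
  ring

end Derivatives

section AmplitudePhase

variable {R Φ L ω : ℝ → ℝ} {V : Set ℝ}

theorem hasDerivAt_mul_sin {x : ℝ} (hR : HasDerivAt R (R x * L x / 2) x)
    (hΦ : HasDerivAt Φ (ω x) x) :
    HasDerivAt (fun y => R y * sin (Φ y))
      (R x * (L x / 2 * sin (Φ x) + ω x * cos (Φ x))) x := by
  refine (hR.mul hΦ.sin).congr_deriv ?_
  ring

theorem deriv_deriv_mul_sin (hV : IsOpen V) (hR : ∀ x ∈ V, HasDerivAt R (R x * L x / 2) x)
    (hΦ : ∀ x ∈ V, HasDerivAt Φ (ω x) x) {p L' ω' : ℝ} (hp : p ∈ V) (hL : HasDerivAt L L' p)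
    (hω : HasDerivAt ω ω' p) :
    deriv (fun y => R y * sin (Φ y)) p = R p * (L p / 2 * sin (Φ p) + ω p * cos (Φ p)) ∧
      deriv (deriv fun y => R y * sin (Φ y)) p =
        R p * ((L p ^ 2 / 4 + L' / 2 - ω p ^ 2) * sin (Φ p) + (L p * ω p + ω') * cos (Φ p)) := by
  have hderiv : deriv (fun y => R y * sin (Φ y)) =ᶠ[𝓝 p]
      fun x => R x * (L x / 2 * sin (Φ x) + ω x * cos (Φ x)) := by
    filter_upwards [hV.mem_nhds hp] with x hx using (hasDerivAt_mul_sin (hR x hx) (hΦ x hx)).deriv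
  refine ⟨hderiv.eq_of_nhds, ?_⟩
  have h : HasDerivAt (fun x => R x * (L x / 2 * sin (Φ x) + ω x * cos (Φ x))) _ p :=
    (hR p hp).mul (((hL.div_const 2).mul (hΦ p hp).sin).add (hω.mul (hΦ p hp).cos))
  rw [hderiv.deriv_eq, h.deriv]
  ring

end AmplitudePhase

/-- With `R'/R = L/2`, `R''/R = L²/4 + L'/2` and `β ω² = |z|/G²`, this is
`β R'' + (3/2) β' R' - β R ω² = k² R` divided by `R`. -/
theorem amplitude_eq_of_constraint {b b' b'' g g' g'' k z : ℝ} (hb : b ≠ 0) (hg : g ≠ 0)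
    (h : 2 * b * g * g'' - b * g' ^ 2 + b' * g * g' - 2 * b'' * g ^ 2 - 4 * k ^ 2 * g ^ 2
      + 4 * z = 0) :
    b * ((g' / g - b' / b) ^ 2 / 4 + ((g'' * g - g' * g') / g ^ 2 - (b'' * b - b' * b') / b ^ 2) / 2
      + z / (g ^ 2 * b)) + 3 / 4 * b' * (g' / g - b' / b) = k ^ 2 := by
  field_simp
  linear_combination (2 * b) * h

theorem stmt_6_general (p₀ k z : ℝ) (hz : z < 0) (β G : ℝ → ℝ)
    (hβ : ContDiff ℝ 2 β) (hG : ContDiff ℝ 2 G)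
    (hβpos : ∀ p ∈ Set.Icc p₀ 0, 0 < β p)
    (hGpos : ∀ p ∈ Set.Icc p₀ 0, 0 < G p)
    (hconstraint : ∀ p ∈ Set.Icc p₀ 0,
      2 * β p * G p * deriv (deriv G) p - β p * (deriv G p) ^ 2
        + deriv β p * G p * deriv G p - 2 * deriv (deriv β) p * (G p) ^ 2
        - 4 * k ^ 2 * (G p) ^ 2 + 4 * z = 0)
    (M : ℝ → ℝ)
    (hM : ∀ p, M p = Real.sqrt (G p / β p) *
        Real.sin (∫ s in p₀..p, Real.sqrt |z| / (G s * Real.sqrt (β s)))) :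
    (∀ p ∈ Set.Icc p₀ 0,
        β p * deriv (deriv M) p + 3 / 2 * deriv β p * deriv M p = k ^ 2 * M p)
      ∧ M p₀ = 0 := by
  refine ⟨fun p hp => ?_, by rw [hM, intervalIntegral.integral_same, sin_zero, mul_zero]⟩
  obtain rfl : M = _ := funext hM
  have hβ₁ : Differentiable ℝ β := hβ.differentiable two_ne_zero
  have hG₁ : Differentiable ℝ G := hG.differentiable two_ne_zero
  have hβ₂ : Differentiable ℝ (deriv β) := hβ.differentiable_deriv_two
  have hG₂ : Differentiable ℝ (deriv G) := hG.differentiable_deriv_two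
  obtain ⟨V, hVo, hVc, hIccV, hVpos⟩ := isCompact_Icc.exists_isOpen_convex_between
    (convex_Icc p₀ 0) ((isOpen_lt continuous_const hβ.continuous).inter
      (isOpen_lt continuous_const hG.continuous)) fun x hx => ⟨hβpos x hx, hGpos x hx⟩
  set ω := fun s => √|z| / (G s * √(β s)) with hω
  set L := fun s => deriv G s / G s - deriv β s / β s with hL
  have hΦ : ∀ x ∈ V, HasDerivAt (fun u => ∫ s in p₀..u, ω s) (ω x) x := by
    refine fun x hx => hasDerivAt_integral_of_continuousOn hVo hVc.ordConnected ?_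
      (hIccV ⟨le_rfl, hp.1.trans hp.2⟩) hx
    exact continuousOn_const.div (hG.continuous.continuousOn.mul
      (continuous_sqrt.comp hβ.continuous).continuousOn)
      fun y hy => mul_ne_zero (hVpos hy).2.ne' (sqrt_pos.mpr (hVpos hy).1).ne'
  have hR : ∀ x ∈ V, HasDerivAt (fun y => √(G y / β y)) (√(G x / β x) * L x / 2) x :=
    fun x hx => (hG₁ x).hasDerivAt.sqrt_div_of_pos (hβ₁ x).hasDerivAt (hVpos hx).2 (hVpos hx).1
  have hβp := hβpos p hp
  have hGp := hGpos p hp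
  have hLp : HasDerivAt L ((deriv (deriv G) p * G p - deriv G p * deriv G p) / G p ^ 2
      - (deriv (deriv β) p * β p - deriv β p * deriv β p) / β p ^ 2) p :=
    ((hG₂ p).hasDerivAt.div (hG₁ p).hasDerivAt hGp.ne').sub
      ((hβ₂ p).hasDerivAt.div (hβ₁ p).hasDerivAt hβp.ne')
  have hωp := (hG₁ p).hasDerivAt.const_div_mul_sqrt √|z| (hβ₁ p).hasDerivAt hGp.ne' hβp
  obtain ⟨hM₁, hM₂⟩ := deriv_deriv_mul_sin hVo hR hΦ (hIccV hp) hLp hωp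
  rw [hM₁, hM₂]
  have hsin := amplitude_eq_of_constraint hβp.ne' hGp.ne' (hconstraint p hp)
  have hcos : β p * (L p * ω p + -(ω p) * (deriv G p / G p + deriv β p / (2 * β p)))
      + 3 / 2 * deriv β p * ω p = 0 := by
    simp only [hL]
    field_simp
    ring
  have hω₂ : ω p ^ 2 = -z / (G p ^ 2 * β p) := by
    rw [hω, div_pow, mul_pow, sq_sqrt hβp.le, sq_sqrt (abs_nonneg z), abs_of_neg hz]
  rw [hω₂]
  linear_combination √(G p / β p) * sin (∫ s in p₀..p, ω s) * hsin
    + √(G p / β p) * cos (∫ s in p₀..p, ω s) * hcos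

/-- For `z < 0` (with total phase less than `π`), the function
`M(p) = √(G(p)/β(p))·sin(∫_{p₀}^p √|z|/(G√β))`
solves `βM'' + (3/2)β'M' = k²M` on `[p₀,0]` with `M(p₀) = 0`. -/
theorem stmt_6 (p₀ k z : ℝ) (hp₀ : p₀ < 0) (hk : 0 < k) (hz : z < 0) (β G : ℝ → ℝ)
    (hβ : ContDiff ℝ 2 β) (hG : ContDiff ℝ 2 G)
    (hβpos : ∀ p ∈ Set.Icc p₀ 0, 0 < β p)
    (hGpos : ∀ p ∈ Set.Icc p₀ 0, 0 < G p)
    (hconstraint : ∀ p ∈ Set.Icc p₀ 0,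
      2 * β p * G p * deriv (deriv G) p - β p * (deriv G p) ^ 2
        + deriv β p * G p * deriv G p - 2 * deriv (deriv β) p * (G p) ^ 2
        - 4 * k ^ 2 * (G p) ^ 2 + 4 * z = 0)
    (hphase : (∫ s in p₀..(0:ℝ), Real.sqrt |z| / (G s * Real.sqrt (β s))) < Real.pi)
    (M : ℝ → ℝ)
    (hM : ∀ p, M p = Real.sqrt (G p / β p) *
        Real.sin (∫ s in p₀..p, Real.sqrt |z| / (G s * Real.sqrt (β s)))) :
    (∀ p ∈ Set.Icc p₀ 0,
        β p * deriv (deriv M) p + 3 / 2 * deriv β p * deriv M p = k ^ 2 * M p)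
      ∧ M p₀ = 0 :=
  stmt_6_general p₀ k z hz β G hβ hG hβpos hGpos hconstraint M hM
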